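/- arXiv:0708.2187 — 5 statements merged into one kernel-verified Lean document; each statement's English description precedes it below -/
import Mathlib

section
/- Along discrete solutions the differential of the action sum reduces to boundary one-forms: if q = (q_0,…,q_N) ∈ E^{N+1} satisfies the discrete Euler–Lagrange equations, then for every variation δ ∈ E^{N+1} (not required to vanish at the endpoints), d/dε|_{ε=0} 𝔊_d(q + εδ) = D₁L_0(q_0, q_1)(δ_0) + D₂L_{N−1}(q_{N−1}, q_N)(δ_N), i.e. the differential of the restricted action is the sum of the left boundary one-form Θ⁻ at (q_0,q_1) and the right boundary one-form Θ⁺ at (q_{N−1},q_N). -/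
/-!
Differentiating term by term, the first variation is
`∑ₖ (D₁Lₖ(qₖ, qₖ₊₁) δₖ + D₂Lₖ(qₖ, qₖ₊₁) δₖ₊₁)`. Regrouping by `δₖ`, the coefficient of each interior
`δₖ` is the discrete Euler–Lagrange expression, which vanishes, so the sum telescopes to its two
boundary terms.
-/

/-- Partial Fréchet derivative of a discrete Lagrangian `L : E × E → ℝ` in its
first argument, evaluated at the point `(x, y)`. -/
noncomputable def D1 {E : Type*} [NormedAddCommGroup E] [NormedSpace ℝ E]
    (L : E × E → ℝ) (x y : E) : E →L[ℝ] ℝ :=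
  fderiv ℝ (fun x' => L (x', y)) x

/-- Partial Fréchet derivative of a discrete Lagrangian `L : E × E → ℝ` in its
second argument, evaluated at the point `(x, y)`. -/
noncomputable def D2 {E : Type*} [NormedAddCommGroup E] [NormedSpace ℝ E]
    (L : E × E → ℝ) (x y : E) : E →L[ℝ] ℝ :=
  fderiv ℝ (fun y' => L (x, y')) y

theorem Finset.sum_range_succ_add_eq_of_cancel {G : Type*} [AddCommGroup G] (a b : ℕ → G)
    (M : ℕ) (hcancel : ∀ k < M, a (k + 1) + b k = 0) :
    ∑ k ∈ Finset.range (M + 1), (a k + b k) = a 0 + b M := by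
  induction M with
  | zero => simp
  | succ M ih =>
    rw [Finset.sum_range_succ, ih fun k hk => hcancel k (by omega)]
    have hM := hcancel M M.lt_succ_self
    calc a 0 + b M + (a (M + 1) + b (M + 1))
        = a 0 + (a (M + 1) + b M) + b (M + 1) := by abel
      _ = a 0 + b (M + 1) := by rw [hM, add_zero]

section PartialDerivatives

variable {E : Type*} [NormedAddCommGroup E] [NormedSpace ℝ E] {L : E × E → ℝ} {x y : E}

theorem DifferentiableAt.D1_eq (hL : DifferentiableAt ℝ L (x, y)) :
    D1 L x y = (fderiv ℝ L (x, y)).comp (ContinuousLinearMap.inl ℝ E E) :=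
  (hL.hasFDerivAt.comp x (hasFDerivAt_prodMk_left x y)).fderiv

theorem DifferentiableAt.D2_eq (hL : DifferentiableAt ℝ L (x, y)) :
    D2 L x y = (fderiv ℝ L (x, y)).comp (ContinuousLinearMap.inr ℝ E E) :=
  (hL.hasFDerivAt.comp y (hasFDerivAt_prodMk_right x y)).fderiv

theorem DifferentiableAt.fderiv_apply_eq_D1_add_D2 (hL : DifferentiableAt ℝ L (x, y))
    (u v : E) : fderiv ℝ L (x, y) (u, v) = D1 L x y u + D2 L x y v := by
  rw [hL.D1_eq, hL.D2_eq, ContinuousLinearMap.comp_apply, ContinuousLinearMap.comp_apply,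
    ← map_add, ContinuousLinearMap.inl_apply, ContinuousLinearMap.inr_apply, Prod.mk_add_mk,
    add_zero, zero_add]

theorem DifferentiableAt.hasDerivAt_along_line (hL : DifferentiableAt ℝ L (x, y)) (u v : E) :
    HasDerivAt (fun ε : ℝ => L (x + ε • u, y + ε • v)) (D1 L x y u + D2 L x y v) 0 := by
  have hline : HasDerivAt (fun ε : ℝ => (x + ε • u, y + ε • v)) (u, v) 0 := by
    have h := ((hasDerivAt_id (0 : ℝ)).smul_const (u, v)).const_add (x, y)
    rwa [one_smul] at h
  have hL' : HasFDerivAt L (fderiv ℝ L (x, y)) (x + (0 : ℝ) • u, y + (0 : ℝ) • v) := by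
    simpa using hL.hasFDerivAt
  rw [← hL.fderiv_apply_eq_D1_add_D2]
  exact hL'.comp_hasDerivAt 0 hline

end PartialDerivatives

theorem discrete_action_differential_on_solutions_general
    {E : Type*} [NormedAddCommGroup E] [NormedSpace ℝ E]
    (N : ℕ) (hN : 2 ≤ N) (L : ℕ → E × E → ℝ)
    (hL : ∀ k < N, ContDiff ℝ 1 (L k))
    (q : ℕ → E)
    (hDEL : ∀ k, 1 ≤ k → k < N →
        D1 (L k) (q k) (q (k + 1)) + D2 (L (k - 1)) (q (k - 1)) (q k) = 0) :
    ∀ δ : ℕ → E,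
      deriv (fun ε : ℝ =>
          ∑ k ∈ Finset.range N, L k (q k + ε • δ k, q (k + 1) + ε • δ (k + 1))) 0
        = D1 (L 0) (q 0) (q 1) (δ 0) + D2 (L (N - 1)) (q (N - 1)) (q N) (δ N) := by
  intro δ
  have hvariation := HasDerivAt.fun_sum fun k (hk : k ∈ Finset.range N) =>
    ((hL k (Finset.mem_range.mp hk)).differentiable one_ne_zero (q k, q (k + 1))
      ).hasDerivAt_along_line (δ k) (δ (k + 1))
  rw [hvariation.deriv]
  obtain ⟨M, rfl⟩ : ∃ M, N = M + 1 := ⟨N - 1, by omega⟩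
  rw [Nat.add_sub_cancel]
  refine Finset.sum_range_succ_add_eq_of_cancel _ _ M fun k hk => ?_
  simpa using congrArg (· (δ (k + 1))) (hDEL (k + 1) (by omega) (by omega))

/-- Along discrete solutions the differential of the action sum reduces to the
boundary one-forms: if `q` satisfies the discrete Euler–Lagrange equations, then
for every variation `δ` (not required to vanish at the endpoints) the first
variation of the action sum equals `Θ⁻(q_0,q_1)(δ_0) + Θ⁺(q_{N-1},q_N)(δ_N)`. -/
theorem discrete_action_differential_on_solutions
    {E : Type*} [NormedAddCommGroup E] [NormedSpace ℝ E] [FiniteDimensional ℝ E]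
    (N : ℕ) (hN : 2 ≤ N) (L : ℕ → E × E → ℝ)
    (hL : ∀ k < N, ContDiff ℝ 1 (L k))
    (q : ℕ → E)
    (hDEL : ∀ k, 1 ≤ k → k < N →
        D1 (L k) (q k) (q (k + 1)) + D2 (L (k - 1)) (q (k - 1)) (q k) = 0) :
    ∀ δ : ℕ → E,
      deriv (fun ε : ℝ =>
          ∑ k ∈ Finset.range N, L k (q k + ε • δ k, q (k + 1) + ε • δ (k + 1))) 0
        = D1 (L 0) (q 0) (q 1) (δ 0) + D2 (L (N - 1)) (q (N - 1)) (q N) (δ N) :=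
  discrete_action_differential_on_solutions_general N hN L hL q hDEL
end

section
/- The discrete flow defined by the discrete Euler–Lagrange equations is symplectic: let L, L' : E × E → ℝ be twice continuously differentiable discrete Lagrangians (for two consecutive time steps) and let ψ : E × E → E be twice continuously differentiable such that the one-step map Φ(x,y) = (y, ψ(x,y)) satisfies the discrete Euler–Lagrange matching condition D₁L'(y, ψ(x,y)) + D₂L(x,y) = 0 for all (x,y) ∈ E × E. Then Φ pulls back the discrete symplectic form of L' to that of L: for every z ∈ E × E and all w₁, w₂ ∈ E × E, Ω_{L'}(Φ(z))(DΦ(z)w₁, DΦ(z)w₂) = Ω_L(z)(w₁, w₂), where DΦ(z) is the Fréchet derivative of Φ at z. -/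
/-- The right discrete one-form `Θ⁺_L(x,y)(u,v) = D₂L(x,y)(v)`. -/
noncomputable def thetaPlus {E : Type*} [NormedAddCommGroup E] [NormedSpace ℝ E]
    (L : E × E → ℝ) (z : E × E) : E × E →L[ℝ] ℝ :=
  (D2 L z.1 z.2).comp (ContinuousLinearMap.snd ℝ E E)

/-- The left discrete one-form `Θ⁻_L(x,y)(u,v) = D₁L(x,y)(u)`. -/
noncomputable def thetaMinus {E : Type*} [NormedAddCommGroup E] [NormedSpace ℝ E]
    (L : E × E → ℝ) (z : E × E) : E × E →L[ℝ] ℝ :=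
  (D1 L z.1 z.2).comp (ContinuousLinearMap.fst ℝ E E)

/-- Exterior derivative of a one-form `θ` on the vector space `E × E`:
`dθ(z)(w₁,w₂) = (Dθ(z)w₁)(w₂) − (Dθ(z)w₂)(w₁)`. -/
noncomputable def extDer {E : Type*} [NormedAddCommGroup E] [NormedSpace ℝ E]
    (θ : E × E → (E × E →L[ℝ] ℝ)) (z w₁ w₂ : E × E) : ℝ :=
  fderiv ℝ θ z w₁ w₂ - fderiv ℝ θ z w₂ w₁

/-- The discrete symplectic two-form `Ω_L := dΘ⁺_L` of the discrete Lagrangian `L`. -/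
noncomputable def OmegaL {E : Type*} [NormedAddCommGroup E] [NormedSpace ℝ E]
    (L : E × E → ℝ) (z w₁ w₂ : E × E) : ℝ :=
  extDer (thetaPlus L) z w₁ w₂

section DiscreteLagrangian

open ContinuousLinearMap

variable {E : Type*} [NormedAddCommGroup E] [NormedSpace ℝ E]

lemma D1_eq_fderiv_comp_inl {L : E × E → ℝ} {x y : E} (hL : DifferentiableAt ℝ L (x, y)) :
    D1 L x y = (fderiv ℝ L (x, y)).comp (inl ℝ E E) :=
  (hL.hasFDerivAt.comp x (hasFDerivAt_prodMk_left x y)).fderiv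

lemma D2_eq_fderiv_comp_inr {L : E × E → ℝ} {x y : E} (hL : DifferentiableAt ℝ L (x, y)) :
    D2 L x y = (fderiv ℝ L (x, y)).comp (inr ℝ E E) :=
  (hL.hasFDerivAt.comp y (hasFDerivAt_prodMk_right x y)).fderiv

lemma thetaPlus_eq_fderiv_comp {L : E × E → ℝ} (hL : Differentiable ℝ L) :
    thetaPlus L = fun z => (fderiv ℝ L z).comp ((inr ℝ E E).comp (snd ℝ E E)) := by
  funext z
  rw [thetaPlus, D2_eq_fderiv_comp_inr (hL z), comp_assoc]

lemma fderiv_thetaPlus_apply {L : E × E → ℝ} (hL : ContDiff ℝ 2 L) (z w v : E × E) :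
    fderiv ℝ (thetaPlus L) z w v = fderiv ℝ (fderiv ℝ L) z w (0, v.2) := by
  have hdL : DifferentiableAt ℝ (fderiv ℝ L) z :=
    (hL.fderiv_right (m := 1) le_rfl).differentiable one_ne_zero z
  rw [thetaPlus_eq_fderiv_comp (hL.differentiable two_ne_zero),
    (hdL.hasFDerivAt.clm_comp (hasFDerivAt_const _ z)).fderiv]
  simp

lemma OmegaL_eq {L : E × E → ℝ} (hL : ContDiff ℝ 2 L) (z w₁ w₂ : E × E) :
    OmegaL L z w₁ w₂ =
      fderiv ℝ (fderiv ℝ L) z w₁ (0, w₂.2) - fderiv ℝ (fderiv ℝ L) z w₂ (0, w₁.2) := by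
  rw [OmegaL, extDer, fderiv_thetaPlus_apply hL, fderiv_thetaPlus_apply hL]

lemma hasFDerivAt_snd_prodMk {ψ : E × E → E} {z : E × E} (hψ : DifferentiableAt ℝ ψ z) :
    HasFDerivAt (fun z : E × E => (z.2, ψ z)) ((snd ℝ E E).prod (fderiv ℝ ψ z)) z :=
  hasFDerivAt_snd.prodMk hψ.hasFDerivAt

lemma discrete_euler_lagrange_linearized {L L' : E × E → ℝ} (hL : ContDiff ℝ 2 L)
    (hL' : ContDiff ℝ 2 L') {ψ : E × E → E} (hψ : Differentiable ℝ ψ)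
    (hDEL : ∀ z : E × E, D1 L' z.2 (ψ z) + D2 L z.1 z.2 = 0) (z w : E × E) (u : E) :
    fderiv ℝ (fderiv ℝ L') (z.2, ψ z) (w.2, fderiv ℝ ψ z w) (u, 0)
      + fderiv ℝ (fderiv ℝ L) z w (0, u) = 0 := by
  have hdL : Differentiable ℝ (fderiv ℝ L) :=
    (hL.fderiv_right (m := 1) le_rfl).differentiable one_ne_zero
  have hdL' : Differentiable ℝ (fderiv ℝ L') :=
    (hL'.fderiv_right (m := 1) le_rfl).differentiable one_ne_zero
  have hzero :
      (fun p : E × E => fderiv ℝ L' (p.2, ψ p) (u, 0) + fderiv ℝ L p (0, u)) = fun _ => 0 := by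
    funext p
    have h := congrArg (fun T : E →L[ℝ] ℝ => T u) (hDEL p)
    simpa [D1_eq_fderiv_comp_inl (hL'.differentiable two_ne_zero _),
      D2_eq_fderiv_comp_inr (hL.differentiable two_ne_zero _)] using h
  have hderiv : HasFDerivAt
      (fun p : E × E => fderiv ℝ L' (p.2, ψ p) (u, 0) + fderiv ℝ L p (0, u)) _ z :=
    (((hdL' _).hasFDerivAt.comp z (hasFDerivAt_snd_prodMk (hψ z))).clm_apply
      (hasFDerivAt_const _ z)).add ((hdL z).hasFDerivAt.clm_apply (hasFDerivAt_const _ z))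
  rw [hzero] at hderiv
  simpa using (congrArg (fun T => T w) (hasFDerivAt_const (0 : ℝ) z |>.unique hderiv)).symm

lemma sub_apply_zero_snd_of_symm {F G : Type*} [NormedAddCommGroup F] [NormedSpace ℝ F]
    [NormedAddCommGroup G] [NormedSpace ℝ G]
    (B : E × F →L[ℝ] E × F →L[ℝ] G) (hB : ∀ v w, B v w = B w v) (v w : E × F) :
    B v (0, w.2) - B w (0, v.2) = B w (v.1, 0) - B v (w.1, 0) := by
  have hsplit : ∀ x : E × F, ((0 : E), x.2) = x - (x.1, 0) := fun x => by ext <;> simp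
  rw [hsplit w, hsplit v, map_sub, map_sub, hB v w]
  abel

end DiscreteLagrangian

theorem discrete_flow_symplectic_general
    {E : Type*} [NormedAddCommGroup E] [NormedSpace ℝ E]
    (L L' : E × E → ℝ) (hL : ContDiff ℝ 2 L) (hL' : ContDiff ℝ 2 L')
    (ψ : E × E → E) (hψ : ContDiff ℝ 2 ψ)
    (hDEL : ∀ z : E × E, D1 L' z.2 (ψ z) + D2 L z.1 z.2 = 0) :
    ∀ (z w₁ w₂ : E × E),
      OmegaL L' ((fun z : E × E => (z.2, ψ z)) z)
          (fderiv ℝ (fun z : E × E => (z.2, ψ z)) z w₁)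
          (fderiv ℝ (fun z : E × E => (z.2, ψ z)) z w₂)
        = OmegaL L z w₁ w₂ := by
  intro z w₁ w₂
  have hψd : Differentiable ℝ ψ := hψ.differentiable two_ne_zero
  rw [(hasFDerivAt_snd_prodMk (hψd z)).fderiv, OmegaL_eq hL', OmegaL_eq hL,
    sub_apply_zero_snd_of_symm _ (hL'.contDiffAt.isSymmSndFDerivAt (by simp))]
  simp only [ContinuousLinearMap.prod_apply, ContinuousLinearMap.coe_snd']
  have h₁ := discrete_euler_lagrange_linearized hL hL' hψd hDEL z w₁ w₂.2
  have h₂ := discrete_euler_lagrange_linearized hL hL' hψd hDEL z w₂ w₁.2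
  linarith

/-- The discrete flow defined by the discrete Euler–Lagrange equations is
symplectic: if the one-step map `Φ(x,y) = (y, ψ(x,y))` satisfies the discrete
Euler–Lagrange matching condition `D₁L'(y, ψ(x,y)) + D₂L(x,y) = 0`, then `Φ`
pulls back the discrete symplectic form of `L'` to that of `L`. -/
theorem discrete_flow_symplectic
    {E : Type*} [NormedAddCommGroup E] [NormedSpace ℝ E] [FiniteDimensional ℝ E]
    (L L' : E × E → ℝ) (hL : ContDiff ℝ 2 L) (hL' : ContDiff ℝ 2 L')
    (ψ : E × E → E) (hψ : ContDiff ℝ 2 ψ)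
    (hDEL : ∀ z : E × E, D1 L' z.2 (ψ z) + D2 L z.1 z.2 = 0) :
    ∀ (z w₁ w₂ : E × E),
      OmegaL L' ((fun z : E × E => (z.2, ψ z)) z)
          (fderiv ℝ (fun z : E × E => (z.2, ψ z)) z w₁)
          (fderiv ℝ (fun z : E × E => (z.2, ψ z)) z w₂)
        = OmegaL L z w₁ w₂ :=
  discrete_flow_symplectic_general L L' hL hL' ψ hψ hDEL
end

section
/- Discrete Noether theorem: let ξ : E → E be a map (the infinitesimal generator of a symmetry acting on configurations) and assume each discrete Lagrangian L_k is infinitesimally invariant, i.e. D₁L_k(x,y)(ξ(x)) + D₂L_k(x,y)(ξ(y)) = 0 for all (x,y) ∈ E × E and all k = 0,…,N−1. If q = (q_0,…,q_N) satisfies the discrete Euler–Lagrange equations, then the discrete momentum map is conserved along the discrete flow: D₂L_k(q_k, q_{k+1})(ξ(q_{k+1})) = D₂L_{k−1}(q_{k−1}, q_k)(ξ(q_k)) for all k = 1,…,N−1; in particular the sequence k ↦ D₂L_k(q_k,q_{k+1})(ξ(q_{k+1})) is constant for k = 0,…,N−1. -/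
/-- Discrete Noether theorem: if each discrete Lagrangian `L_k` is
infinitesimally invariant under the generator `ξ`, i.e.
`D₁L_k(x,y)(ξ(x)) + D₂L_k(x,y)(ξ(y)) = 0`, and `q` satisfies the discrete
Euler–Lagrange equations, then the discrete momentum map
`k ↦ D₂L_k(q_k, q_{k+1})(ξ(q_{k+1}))` is conserved along the discrete flow. -/
theorem discrete_noether
    {E : Type*} [NormedAddCommGroup E] [NormedSpace ℝ E] [FiniteDimensional ℝ E]
    (N : ℕ) (hN : 2 ≤ N) (L : ℕ → E × E → ℝ)
    (hL : ∀ k < N, ContDiff ℝ 1 (L k))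
    (ξ : E → E)
    (hinv : ∀ k < N, ∀ x y : E, D1 (L k) x y (ξ x) + D2 (L k) x y (ξ y) = 0)
    (q : ℕ → E)
    (hDEL : ∀ k, 1 ≤ k → k < N →
        D1 (L k) (q k) (q (k + 1)) + D2 (L (k - 1)) (q (k - 1)) (q k) = 0) :
    (∀ k, 1 ≤ k → k < N →
        D2 (L k) (q k) (q (k + 1)) (ξ (q (k + 1)))
          = D2 (L (k - 1)) (q (k - 1)) (q k) (ξ (q k)))
    ∧ (∀ k < N,
        D2 (L k) (q k) (q (k + 1)) (ξ (q (k + 1)))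
          = D2 (L 0) (q 0) (q 1) (ξ (q 1))) := by
  have key : ∀ k, 1 ≤ k → k < N →
      D2 (L k) (q k) (q (k + 1)) (ξ (q (k + 1)))
        = D2 (L (k - 1)) (q (k - 1)) (q k) (ξ (q k)) := by
    intro k hk1 hk2
    have h1 := hinv k hk2 (q k) (q (k + 1))
    have h2 := congrArg (fun T : E →L[ℝ] ℝ => T (ξ (q k))) (hDEL k hk1 hk2)
    simp only [ContinuousLinearMap.add_apply, ContinuousLinearMap.zero_apply] at h2
    linarith
  refine ⟨key, ?_⟩
  intro k hk
  induction k with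
  | zero => rfl
  | succ n ih =>
    have h := key (n + 1) (Nat.le_add_left 1 n) hk
    simp only [Nat.add_sub_cancel] at h
    rw [h, ih (lt_trans (Nat.lt_succ_self n) hk)]
end

section
/- The stochastic variational Euler scheme on ℝⁿ is characterized by stationarity of the discrete Hamilton–Pontryagin action sum: 𝔊_d^e is stationary at (q,v,p) with respect to all variations of q_j for 1 ≤ j ≤ N−1, of v_j for 1 ≤ j ≤ N−1, and of p_j for 1 ≤ j ≤ N (i.e. all the corresponding partial Fréchet derivatives of 𝔊_d^e vanish) if and only if the stochastic discrete Hamilton–Pontryagin equations hold: q_j = q_{j−1} + h v_j for 1 ≤ j ≤ N; p_j = (∂L/∂v)(q_j, v_j) for 1 ≤ j ≤ N−1; and p_{j+1} = p_j + h (∂L/∂q)(q_j, v_j) + Σ_{i=1}^m (∂γ_i/∂q)(q_j) b_i^j for 1 ≤ j ≤ N−1. -/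
open scoped RealInnerProductSpace

/-- The discrete Hamilton–Pontryagin action sum
`𝔊_d^e(q,v,p) = ∑_{k=0}^{N-1} [ L(q_k,v_k) h + ∑_{i=1}^m γ_i(q_k) b_i^k
  + ⟨p_{k+1}, (q_{k+1} − q_k)/h − v_{k+1}⟩ h ]` on `ℝⁿ`. -/
noncomputable def discreteHPAction (n m N : ℕ) (h : ℝ)
    (L : EuclideanSpace ℝ (Fin n) × EuclideanSpace ℝ (Fin n) → ℝ)
    (γ : ℕ → EuclideanSpace ℝ (Fin n) → ℝ) (b : ℕ → ℕ → ℝ)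
    (q v p : ℕ → EuclideanSpace ℝ (Fin n)) : ℝ :=
  ∑ k ∈ Finset.range N,
    (L (q k, v k) * h + ∑ i ∈ Finset.range m, γ i (q k) * b i k
      + ⟪p (k + 1), h⁻¹ • (q (k + 1) - q k) - v (k + 1)⟫ * h)

/-!
Write `x_k = (q_k, v_k, p_k)`, so that `𝔊_d^e = ∑_{k<N} F_k(x_k, x_{k+1})`. Perturbing one
component of `x_j` moves only the summands `k = j - 1` and `k = j`, so the derivative in the
direction `u` is `⟪r, u⟫` (times `h`) for an explicit residual `r`: `(q_j - q_{j-1}) / h - v_j`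
for `p_j`, `∂_v L - p_j` for `v_j`, and `p_j + h ∂_q L + ∑ b_i^j ∇γ_i - p_{j+1}` for `q_j`.
Taking `u = r` shows that it vanishes for every `u` iff `r = 0`, which is the corresponding
discrete Hamilton–Pontryagin equation.
-/

theorem hasDerivAt_sum_range_of_eq_off {α : Type*} (F : ℕ → α → α → ℝ) {x : ℝ → ℕ → α}
    (x₀ : ℕ → α) (c : ℝ → α) {j N : ℕ} (hj : 1 ≤ j) (hjN : j ≤ N)
    (hx : ∀ ε k, k ≠ j → x ε k = x₀ k) (hxj : ∀ ε, x ε j = c ε) {a b : ℝ}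
    (ha : HasDerivAt (fun ε => F j (c ε) (x₀ (j + 1))) a 0)
    (hb : HasDerivAt (fun ε => F (j - 1) (x₀ (j - 1)) (c ε)) b 0) :
    HasDerivAt (fun ε => ∑ k ∈ Finset.range N, F k (x ε k) (x ε (k + 1)))
      ((if j < N then a else 0) + b) 0 := by
  obtain ⟨i, rfl⟩ : ∃ i, j = i + 1 := ⟨j - 1, by omega⟩
  have hterm : ∀ k, HasDerivAt (fun ε => F k (x ε k) (x ε (k + 1)))
      ((if k = i + 1 then a else 0) + if k = i then b else 0) 0 := by
    intro k
    by_cases hk : k = i + 1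
    · subst hk
      simpa [hxj, hx _ (i + 1 + 1) (by omega)] using ha
    by_cases hk' : k = i
    · subst hk'
      simpa [hxj, hx _ k (by omega)] using hb
    simpa [hk, hk', hx _ k hk, hx _ (k + 1) (by omega)] using
      hasDerivAt_const (0 : ℝ) (F k (x₀ k) (x₀ (k + 1)))
  refine (HasDerivAt.fun_sum (u := Finset.range N) fun k _ => hterm k).congr_deriv ?_
  rw [Finset.sum_add_distrib, Finset.sum_ite_eq', Finset.sum_ite_eq']
  simp [Finset.mem_range, show i < N by omega]

theorem hasDerivAt_line {E : Type*} [NormedAddCommGroup E] [NormedSpace ℝ E] (x u : E) :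
    HasDerivAt (fun ε : ℝ => x + ε • u) u 0 := by
  simpa using ((hasDerivAt_id (0 : ℝ)).smul_const u).const_add x

section InnerProductSpace

variable {E : Type*} [NormedAddCommGroup E] [InnerProductSpace ℝ E]

theorem forall_deriv_eq_zero_iff_of_hasDerivAt {f : E → ℝ → ℝ} {c : E} {a : ℝ} (ha : a ≠ 0)
    (hf : ∀ u, HasDerivAt (f u) (⟪c, u⟫ * a) 0) : (∀ u, deriv (f u) 0 = 0) ↔ c = 0 := by
  simp only [fun u => (hf u).deriv, mul_eq_zero, ha, or_false]
  exact ⟨fun H => inner_self_eq_zero.mp (H c), fun H u => by simp [H]⟩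

variable (m : ℕ) (h : ℝ) (L : E × E → ℝ) (γ : ℕ → E → ℝ) (b : ℕ → ℕ → ℝ) (k : ℕ)

/-- The `k`-th summand of `𝔊_d^e`, as a function of `x = (q_k, v_k, p_k)` and
`y = (q_{k+1}, v_{k+1}, p_{k+1})`. -/
noncomputable def hpSummand (x y : E × E × E) : ℝ :=
  L (x.1, x.2.1) * h + ∑ i ∈ Finset.range m, γ i x.1 * b i k
    + ⟪y.2.2, h⁻¹ • (y.1 - x.1) - y.2.1⟫ * h

variable {m h L γ b k} (q v p u : E) (x y : E × E × E)

theorem hasDerivAt_hpSummand_right_q (hh : h ≠ 0) :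
    HasDerivAt (fun ε : ℝ => hpSummand m h L γ b k x (q + ε • u, v, p)) ⟪p, u⟫ 0 := by
  have := ((hasDerivAt_const (0 : ℝ) p).inner ℝ
    ((((hasDerivAt_line q u).sub_const x.1).const_smul h⁻¹).sub_const v)).mul_const h
  refine (this.const_add _).congr_deriv ?_
  simp only [real_inner_smul_right, Pi.smul_apply, zero_smul, add_zero, inner_zero_left]
  field_simp

theorem hasDerivAt_hpSummand_right_v :
    HasDerivAt (fun ε : ℝ => hpSummand m h L γ b k x (q, v + ε • u, p)) (-⟪p, u⟫ * h) 0 := by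
  have := ((hasDerivAt_const (0 : ℝ) p).inner ℝ
    ((hasDerivAt_line v u).const_sub (h⁻¹ • (q - x.1)))).mul_const h
  refine (this.const_add _).congr_deriv ?_
  simp

theorem hasDerivAt_hpSummand_left_p :
    HasDerivAt (fun ε : ℝ => hpSummand m h L γ b k (q, v, p + ε • u) y) 0 0 := by
  simp only [hpSummand]
  exact hasDerivAt_const _ _

theorem hasDerivAt_hpSummand_right_p :
    HasDerivAt (fun ε : ℝ => hpSummand m h L γ b k x (q, v, p + ε • u))
      (⟪h⁻¹ • (q - x.1) - v, u⟫ * h) 0 := by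
  have := ((hasDerivAt_line p u).inner ℝ
    (hasDerivAt_const (0 : ℝ) (h⁻¹ • (q - x.1) - v))).mul_const h
  refine (this.const_add _).congr_deriv ?_
  simp [real_inner_comm]

variable [CompleteSpace E]

theorem HasGradientAt.hasDerivAt_line {f : E → ℝ} {f' x : E} (hf : HasGradientAt f f' x) (u : E) :
    HasDerivAt (fun ε : ℝ => f (x + ε • u)) ⟪f', u⟫ 0 := by
  simpa [HasLineDerivAt] using hf.hasFDerivAt.hasLineDerivAt u

theorem hasDerivAt_hpSummand_left_q (hh : h ≠ 0) (hL : DifferentiableAt ℝ L (q, v))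
    (hγ : ∀ i < m, DifferentiableAt ℝ (γ i) q) :
    HasDerivAt (fun ε : ℝ => hpSummand m h L γ b k (q + ε • u, v, p) y)
      ⟪h • gradient (fun z => L (z, v)) q + ∑ i ∈ Finset.range m, b i k • gradient (γ i) q
        - y.2.2, u⟫ 0 := by
  have hLq : DifferentiableAt ℝ (fun z => L (z, v)) q := by fun_prop
  have hγq : HasDerivAt (fun ε : ℝ => ∑ i ∈ Finset.range m, γ i (q + ε • u) * b i k)
      (∑ i ∈ Finset.range m, ⟪gradient (γ i) q, u⟫ * b i k) 0 :=
    HasDerivAt.fun_sum fun i hi =>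
      ((hγ i (Finset.mem_range.mp hi)).hasGradientAt.hasDerivAt_line u).mul_const _
  have hcoupling := ((hasDerivAt_const (0 : ℝ) y.2.2).inner ℝ
    ((((hasDerivAt_line q u).const_sub y.1).const_smul h⁻¹).sub_const y.2.1)).mul_const h
  refine (((hLq.hasGradientAt.hasDerivAt_line u).mul_const h |>.add hγq).add
    hcoupling).congr_deriv ?_
  simp only [inner_add_left, inner_sub_left, real_inner_smul_left, sum_inner, inner_neg_right,
    real_inner_smul_right, inner_zero_left, add_zero, mul_comm (b _ k)]
  field_simp
  ring

theorem hasDerivAt_hpSummand_left_v (hL : DifferentiableAt ℝ L (q, v)) :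
    HasDerivAt (fun ε : ℝ => hpSummand m h L γ b k (q, v + ε • u, p) y)
      (⟪gradient (fun w => L (q, w)) v, u⟫ * h) 0 := by
  have hLv : DifferentiableAt ℝ (fun w => L (q, w)) v := by fun_prop
  simp only [hpSummand]
  exact ((hLv.hasGradientAt.hasDerivAt_line u).mul_const h).add_const _ |>.add_const _

end InnerProductSpace

section EuclideanSpace

variable {n m N : ℕ} {h : ℝ} {L : EuclideanSpace ℝ (Fin n) × EuclideanSpace ℝ (Fin n) → ℝ}
  {γ : ℕ → EuclideanSpace ℝ (Fin n) → ℝ} {b : ℕ → ℕ → ℝ} {q v p : ℕ → EuclideanSpace ℝ (Fin n)}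
  {j : ℕ}

theorem discreteHPAction_eq_sum_hpSummand :
    discreteHPAction n m N h L γ b q v p = ∑ k ∈ Finset.range N,
      hpSummand m h L γ b k (q k, v k, p k) (q (k + 1), v (k + 1), p (k + 1)) := rfl

theorem hasDerivAt_discreteHPAction_update_q (hh : h ≠ 0) (hL : DifferentiableAt ℝ L (q j, v j))
    (hγ : ∀ i < m, DifferentiableAt ℝ (γ i) (q j)) (hj : 1 ≤ j) (hjN : j < N)
    (u : EuclideanSpace ℝ (Fin n)) :
    HasDerivAt (fun ε : ℝ => discreteHPAction n m N h L γ b (Function.update q j (q j + ε • u)) v p)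
      ⟪p j + h • gradient (fun x => L (x, v j)) (q j)
        + ∑ i ∈ Finset.range m, b i j • gradient (γ i) (q j) - p (j + 1), u⟫ 0 := by
  simp only [discreteHPAction_eq_sum_hpSummand]
  refine (hasDerivAt_sum_range_of_eq_off (hpSummand m h L γ b) (fun k => (q k, v k, p k))
    (fun ε => (q j + ε • u, v j, p j)) hj hjN.le
    (fun ε k hk => by simp [Function.update_of_ne hk]) (fun ε => by simp)
    (hasDerivAt_hpSummand_left_q _ _ _ u _ hh hL hγ)
    (hasDerivAt_hpSummand_right_q _ _ _ u _ hh)).congr_deriv ?_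
  simp only [if_pos hjN, inner_add_left, inner_sub_left]
  ring

theorem hasDerivAt_discreteHPAction_update_v (hL : DifferentiableAt ℝ L (q j, v j)) (hj : 1 ≤ j)
    (hjN : j < N) (u : EuclideanSpace ℝ (Fin n)) :
    HasDerivAt (fun ε : ℝ => discreteHPAction n m N h L γ b q (Function.update v j (v j + ε • u)) p)
      (⟪gradient (fun w => L (q j, w)) (v j) - p j, u⟫ * h) 0 := by
  simp only [discreteHPAction_eq_sum_hpSummand]
  refine (hasDerivAt_sum_range_of_eq_off (hpSummand m h L γ b) (fun k => (q k, v k, p k))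
    (fun ε => (q j, v j + ε • u, p j)) hj hjN.le
    (fun ε k hk => by simp [Function.update_of_ne hk]) (fun ε => by simp)
    (hasDerivAt_hpSummand_left_v _ _ _ u _ hL)
    (hasDerivAt_hpSummand_right_v _ _ _ u _)).congr_deriv ?_
  simp only [if_pos hjN, inner_sub_left]
  ring

theorem hasDerivAt_discreteHPAction_update_p (hj : 1 ≤ j) (hjN : j ≤ N)
    (u : EuclideanSpace ℝ (Fin n)) :
    HasDerivAt (fun ε : ℝ => discreteHPAction n m N h L γ b q v (Function.update p j (p j + ε • u)))
      (⟪h⁻¹ • (q j - q (j - 1)) - v j, u⟫ * h) 0 := by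
  simp only [discreteHPAction_eq_sum_hpSummand]
  refine (hasDerivAt_sum_range_of_eq_off (hpSummand m h L γ b) (fun k => (q k, v k, p k))
    (fun ε => (q j, v j, p j + ε • u)) hj hjN
    (fun ε k hk => by simp [Function.update_of_ne hk]) (fun ε => by simp)
    (hasDerivAt_hpSummand_left_p _ _ _ u _)
    (hasDerivAt_hpSummand_right_p _ _ _ u _)).congr_deriv ?_
  simp

theorem forall_deriv_update_q_eq_zero_iff (hh : h ≠ 0) (hL : DifferentiableAt ℝ L (q j, v j))
    (hγ : ∀ i < m, DifferentiableAt ℝ (γ i) (q j)) (hj : 1 ≤ j) (hjN : j < N) :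
    (∀ u, deriv (fun ε : ℝ =>
        discreteHPAction n m N h L γ b (Function.update q j (q j + ε • u)) v p) 0 = 0) ↔
      p (j + 1) = p j + h • gradient (fun x => L (x, v j)) (q j)
        + ∑ i ∈ Finset.range m, b i j • gradient (γ i) (q j) :=
  (forall_deriv_eq_zero_iff_of_hasDerivAt one_ne_zero fun u =>
    (hasDerivAt_discreteHPAction_update_q hh hL hγ hj hjN u).congr_deriv (mul_one _).symm).trans
    (sub_eq_zero.trans eq_comm)

theorem forall_deriv_update_v_eq_zero_iff (hh : h ≠ 0) (hL : DifferentiableAt ℝ L (q j, v j))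
    (hj : 1 ≤ j) (hjN : j < N) :
    (∀ u, deriv (fun ε : ℝ =>
        discreteHPAction n m N h L γ b q (Function.update v j (v j + ε • u)) p) 0 = 0) ↔
      p j = gradient (fun w => L (q j, w)) (v j) :=
  (forall_deriv_eq_zero_iff_of_hasDerivAt hh
    (hasDerivAt_discreteHPAction_update_v hL hj hjN)).trans (sub_eq_zero.trans eq_comm)

theorem forall_deriv_update_p_eq_zero_iff (hh : h ≠ 0) (hj : 1 ≤ j) (hjN : j ≤ N) :
    (∀ u, deriv (fun ε : ℝ =>
        discreteHPAction n m N h L γ b q v (Function.update p j (p j + ε • u))) 0 = 0) ↔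
      q j = q (j - 1) + h • v j := by
  rw [forall_deriv_eq_zero_iff_of_hasDerivAt hh (hasDerivAt_discreteHPAction_update_p hj hjN),
    sub_eq_zero, inv_smul_eq_iff₀ hh, sub_eq_iff_eq_add']

end EuclideanSpace

theorem stochastic_variational_euler_characterization_general
    (n m N : ℕ) (h : ℝ) (hh : 0 < h)
    (L : EuclideanSpace ℝ (Fin n) × EuclideanSpace ℝ (Fin n) → ℝ)
    (hL : ContDiff ℝ 1 L)
    (γ : ℕ → EuclideanSpace ℝ (Fin n) → ℝ)
    (hγ : ∀ i < m, ContDiff ℝ 1 (γ i))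
    (b : ℕ → ℕ → ℝ)
    (q v p : ℕ → EuclideanSpace ℝ (Fin n)) :
    ((∀ j, 1 ≤ j → j < N → ∀ u : EuclideanSpace ℝ (Fin n),
        deriv (fun ε : ℝ => discreteHPAction n m N h L γ b
          (Function.update q j (q j + ε • u)) v p) 0 = 0) ∧
     (∀ j, 1 ≤ j → j < N → ∀ u : EuclideanSpace ℝ (Fin n),
        deriv (fun ε : ℝ => discreteHPAction n m N h L γ b
          q (Function.update v j (v j + ε • u)) p) 0 = 0) ∧
     (∀ j, 1 ≤ j → j ≤ N → ∀ u : EuclideanSpace ℝ (Fin n),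
        deriv (fun ε : ℝ => discreteHPAction n m N h L γ b
          q v (Function.update p j (p j + ε • u))) 0 = 0))
    ↔
    ((∀ j, 1 ≤ j → j ≤ N → q j = q (j - 1) + h • v j) ∧
     (∀ j, 1 ≤ j → j < N →
        p j = gradient (fun u => L (q j, u)) (v j)) ∧
     (∀ j, 1 ≤ j → j < N →
        p (j + 1) = p j + h • gradient (fun x => L (x, v j)) (q j)
          + ∑ i ∈ Finset.range m, b i j • gradient (γ i) (q j))) := by
  have hLd := hL.differentiable one_ne_zero
  have hγd x : ∀ i < m, DifferentiableAt ℝ (γ i) x := fun i hi =>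
    ((hγ i hi).differentiable one_ne_zero).differentiableAt
  constructor
  · rintro ⟨hq, hv, hp⟩
    exact ⟨fun j hj hjN => (forall_deriv_update_p_eq_zero_iff hh.ne' hj hjN).1 (hp j hj hjN),
      fun j hj hjN => (forall_deriv_update_v_eq_zero_iff hh.ne' (hLd _) hj hjN).1 (hv j hj hjN),
      fun j hj hjN =>
        (forall_deriv_update_q_eq_zero_iff hh.ne' (hLd _) (hγd _) hj hjN).1 (hq j hj hjN)⟩
  · rintro ⟨hp, hv, hq⟩
    exact ⟨fun j hj hjN =>
        (forall_deriv_update_q_eq_zero_iff hh.ne' (hLd _) (hγd _) hj hjN).2 (hq j hj hjN),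
      fun j hj hjN => (forall_deriv_update_v_eq_zero_iff hh.ne' (hLd _) hj hjN).2 (hv j hj hjN),
      fun j hj hjN => (forall_deriv_update_p_eq_zero_iff hh.ne' hj hjN).2 (hp j hj hjN)⟩

/-- The stochastic variational Euler scheme on `ℝⁿ` is characterized by
stationarity of the discrete Hamilton–Pontryagin action sum: all partial
Fréchet derivatives of `𝔊_d^e` with respect to `q_j` (`1 ≤ j ≤ N−1`),
`v_j` (`1 ≤ j ≤ N−1`) and `p_j` (`1 ≤ j ≤ N`) vanish iff the stochastic
discrete Hamilton–Pontryagin equations hold. -/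
theorem stochastic_variational_euler_characterization
    (n m N : ℕ) (hn : 1 ≤ n) (hN : 2 ≤ N) (h : ℝ) (hh : 0 < h)
    (L : EuclideanSpace ℝ (Fin n) × EuclideanSpace ℝ (Fin n) → ℝ)
    (hL : ContDiff ℝ 1 L)
    (γ : ℕ → EuclideanSpace ℝ (Fin n) → ℝ)
    (hγ : ∀ i < m, ContDiff ℝ 1 (γ i))
    (b : ℕ → ℕ → ℝ)
    (q v p : ℕ → EuclideanSpace ℝ (Fin n)) :
    ((∀ j, 1 ≤ j → j < N → ∀ u : EuclideanSpace ℝ (Fin n),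
        deriv (fun ε : ℝ => discreteHPAction n m N h L γ b
          (Function.update q j (q j + ε • u)) v p) 0 = 0) ∧
     (∀ j, 1 ≤ j → j < N → ∀ u : EuclideanSpace ℝ (Fin n),
        deriv (fun ε : ℝ => discreteHPAction n m N h L γ b
          q (Function.update v j (v j + ε • u)) p) 0 = 0) ∧
     (∀ j, 1 ≤ j → j ≤ N → ∀ u : EuclideanSpace ℝ (Fin n),
        deriv (fun ε : ℝ => discreteHPAction n m N h L γ b
          q v (Function.update p j (p j + ε • u))) 0 = 0))
    ↔
    ((∀ j, 1 ≤ j → j ≤ N → q j = q (j - 1) + h • v j) ∧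
     (∀ j, 1 ≤ j → j < N →
        p j = gradient (fun u => L (q j, u)) (v j)) ∧
     (∀ j, 1 ≤ j → j < N →
        p (j + 1) = p j + h • gradient (fun x => L (x, v j)) (q j)
          + ∑ i ∈ Finset.range m, b i j • gradient (γ i) (q j))) :=
  stochastic_variational_euler_characterization_general n m N h hh L hL γ hγ b q v p
end

section
/- Pathwise stochastic Noether theorem: let ξ : ℝⁿ → ℝⁿ be continuously differentiable (the infinitesimal generator of a symmetry acting on configurations) and assume infinitesimal invariance of the Lagrangian and of the stochastic potentials: (∂L/∂q)(x,u)·ξ(x) + (∂L/∂v)(x,u)·(Dξ(x)u) = 0 for all (x,u) ∈ ℝⁿ × ℝⁿ, and (∂γ_i/∂q)(x)·ξ(x) = 0 for all x ∈ ℝⁿ and i = 1,…,m. If (q,v,p) satisfies the pathwise stochastic Hamilton–Pontryagin equations (q' = v, p = (∂L/∂v)(q,v), p ∈ C¹ with p' = (∂L/∂q)(q,v) + Σ_i (∂γ_i/∂q)(q) w_i'), then the momentum map t ↦ J(t) = ⟨p(t), ξ(q(t))⟩ is constant on [a,b]. -/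
/-!
Along a solution, the derivative of `t ↦ ⟪p, ξ(q)⟫` is `⟪p, Dξ(q) q'⟫ + ⟪p', ξ(q)⟫`.
Substituting `q' = v`, `p = ∂L/∂v` and `p' = ∂L/∂q + Σ wᵢ' ∂γᵢ/∂q`, the Lagrangian terms
cancel by invariance of `L` and each noise term vanishes by invariance of `γᵢ`. A function
on `[a,b]` with vanishing derivative is constant.
-/

open scoped RealInnerProductSpace

section

variable {E : Type*} [NormedAddCommGroup E] [InnerProductSpace ℝ E]

theorem HasDerivWithinAt.inner_comp_hasFDerivAt {p q : ℝ → E} {p' q' : E} {ξ : E → E}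
    {ξ' : E →L[ℝ] E} {s : Set ℝ} {t : ℝ} (hp : HasDerivWithinAt p p' s t)
    (hq : HasDerivWithinAt q q' s t) (hξ : HasFDerivAt ξ ξ' (q t)) :
    HasDerivWithinAt (fun r => ⟪p r, ξ (q r)⟫) (⟪p t, ξ' q'⟫ + ⟪p', ξ (q t)⟫) s t :=
  hp.inner ℝ (hξ.comp_hasDerivWithinAt t hq)

theorem inner_add_inner_add_sum_smul_eq_zero {ι : Type*} (s : Finset ι) (c : ι → ℝ)
    (gq gv x dx : E) (g : ι → E) (hinv : ⟪gq, x⟫ + ⟪gv, dx⟫ = 0)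
    (hg : ∀ i ∈ s, ⟪g i, x⟫ = 0) :
    ⟪gv, dx⟫ + ⟪gq + ∑ i ∈ s, c i • g i, x⟫ = 0 := by
  have hnoise : ⟪∑ i ∈ s, c i • g i, x⟫ = 0 := by
    rw [sum_inner]
    exact Finset.sum_eq_zero fun i hi => by rw [real_inner_smul_left, hg i hi, mul_zero]
  rw [inner_add_left, hnoise]
  linarith

end

theorem eq_of_hasDerivWithinAt_zero_Icc {F : Type*} [NormedAddCommGroup F] [NormedSpace ℝ F]
    {f : ℝ → F} {a b : ℝ} (hf : ∀ t ∈ Set.Icc a b, HasDerivWithinAt f 0 (Set.Icc a b) t) :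
    ∀ t ∈ Set.Icc a b, f t = f a :=
  constant_of_has_deriv_right_zero (fun t ht => (hf t ht).continuousWithinAt)
    fun t ht => (hf t (Set.mem_Icc_of_Ico ht)).mono_of_mem_nhdsWithin (Icc_mem_nhdsGE_of_mem ht)

theorem stochastic_noether_general
    (a b : ℝ) (n m : ℕ)
    (L : EuclideanSpace ℝ (Fin n) × EuclideanSpace ℝ (Fin n) → ℝ)
    (γ : ℕ → EuclideanSpace ℝ (Fin n) → ℝ)
    (w' : ℕ → ℝ → ℝ)
    (ξ : EuclideanSpace ℝ (Fin n) → EuclideanSpace ℝ (Fin n))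
    (hξ : ContDiff ℝ 1 ξ)
    -- infinitesimal invariance of the Lagrangian
    (hinvL : ∀ x u : EuclideanSpace ℝ (Fin n),
        ⟪gradient (fun x' => L (x', u)) x, ξ x⟫
          + ⟪gradient (fun u' => L (x, u')) u, fderiv ℝ ξ x u⟫ = 0)
    -- infinitesimal invariance of the stochastic potentials
    (hinvγ : ∀ i < m, ∀ x : EuclideanSpace ℝ (Fin n),
        ⟪gradient (γ i) x, ξ x⟫ = 0)
    (q q' v p p' : ℝ → EuclideanSpace ℝ (Fin n))
    (hq : ∀ t ∈ Set.Icc a b, HasDerivWithinAt q (q' t) (Set.Icc a b) t)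
    (hp : ∀ t ∈ Set.Icc a b, HasDerivWithinAt p (p' t) (Set.Icc a b) t)
    -- the pathwise stochastic Hamilton–Pontryagin equations
    (heq1 : ∀ t ∈ Set.Icc a b, q' t = v t)
    (heq2 : ∀ t ∈ Set.Icc a b, p t = gradient (fun u => L (q t, u)) (v t))
    (heq3 : ∀ t ∈ Set.Icc a b,
        p' t = gradient (fun x => L (x, v t)) (q t)
          + ∑ i ∈ Finset.range m, w' i t • gradient (γ i) (q t)) :
    ∀ t ∈ Set.Icc a b, ⟪p t, ξ (q t)⟫ = ⟪p a, ξ (q a)⟫ := by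
  refine eq_of_hasDerivWithinAt_zero_Icc fun t ht => ?_
  have hderiv := (hp t ht).inner_comp_hasFDerivAt (hq t ht)
    ((hξ.differentiable one_ne_zero (q t)).hasFDerivAt)
  have hrate : ⟪p t, fderiv ℝ ξ (q t) (q' t)⟫ + ⟪p' t, ξ (q t)⟫ = 0 := by
    rw [heq1 t ht, heq2 t ht, heq3 t ht]
    exact inner_add_inner_add_sum_smul_eq_zero _ _ _ _ _ _ _ (hinvL (q t) (v t))
      fun i hi => hinvγ i (Finset.mem_range.mp hi) (q t)
  rwa [hrate] at hderiv

/-- Pathwise stochastic Noether theorem: if the Lagrangian and the stochastic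
potentials are infinitesimally invariant under the generator `ξ`, then along
any solution of the pathwise stochastic Hamilton–Pontryagin equations the
momentum map `t ↦ ⟨p(t), ξ(q(t))⟩` is constant on `[a,b]`. -/
theorem stochastic_noether
    (a b : ℝ) (hab : a < b) (n m : ℕ) (hn : 1 ≤ n)
    (L : EuclideanSpace ℝ (Fin n) × EuclideanSpace ℝ (Fin n) → ℝ)
    (hL : ContDiff ℝ 2 L)
    (γ : ℕ → EuclideanSpace ℝ (Fin n) → ℝ)
    (hγ : ∀ i < m, ContDiff ℝ 2 (γ i))
    (w w' : ℕ → ℝ → ℝ)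
    (hw : ∀ i < m, ∀ t ∈ Set.Icc a b, HasDerivWithinAt (w i) (w' i t) (Set.Icc a b) t)
    (hw' : ∀ i < m, ContinuousOn (w' i) (Set.Icc a b))
    (ξ : EuclideanSpace ℝ (Fin n) → EuclideanSpace ℝ (Fin n))
    (hξ : ContDiff ℝ 1 ξ)
    -- infinitesimal invariance of the Lagrangian
    (hinvL : ∀ x u : EuclideanSpace ℝ (Fin n),
        ⟪gradient (fun x' => L (x', u)) x, ξ x⟫
          + ⟪gradient (fun u' => L (x, u')) u, fderiv ℝ ξ x u⟫ = 0)
    -- infinitesimal invariance of the stochastic potentials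
    (hinvγ : ∀ i < m, ∀ x : EuclideanSpace ℝ (Fin n),
        ⟪gradient (γ i) x, ξ x⟫ = 0)
    (q q' v p p' : ℝ → EuclideanSpace ℝ (Fin n))
    (hq : ∀ t ∈ Set.Icc a b, HasDerivWithinAt q (q' t) (Set.Icc a b) t)
    (hq' : ContinuousOn q' (Set.Icc a b))
    (hv : ContinuousOn v (Set.Icc a b))
    (hp : ∀ t ∈ Set.Icc a b, HasDerivWithinAt p (p' t) (Set.Icc a b) t)
    (hp' : ContinuousOn p' (Set.Icc a b))
    -- the pathwise stochastic Hamilton–Pontryagin equations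
    (heq1 : ∀ t ∈ Set.Icc a b, q' t = v t)
    (heq2 : ∀ t ∈ Set.Icc a b, p t = gradient (fun u => L (q t, u)) (v t))
    (heq3 : ∀ t ∈ Set.Icc a b,
        p' t = gradient (fun x => L (x, v t)) (q t)
          + ∑ i ∈ Finset.range m, w' i t • gradient (γ i) (q t)) :
    ∀ t ∈ Set.Icc a b, ⟪p t, ξ (q t)⟫ = ⟪p a, ξ (q a)⟫ :=
  stochastic_noether_general a b n m L γ w' ξ hξ hinvL hinvγ q q' v p p' hq hp heq1 heq2 heq3
end
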